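/- Let h be a bounded continuous function on ℝ₊ × (-∞, L], let a : ℝ → ℝ be bounded, uniformly elliptic, and η-Hölder continuous, and let q̄^z_ε(y,z) = g(a(z)ε, z-y) - g(a(z)ε, z+y-2L). Then for every u ≥ 0 and y < L, lim_{ε→0} ∫_{-∞}^L h(u+ε, z) q̄^z_ε(y,z) dz = h(u, y). -/

import Mathlib

/-!
Substituting `z = s + √ε w` turns `∫_{z ≤ L} F(z) g(a(z)ε, z - s) dz` into
`∫ 1_{s + √ε w ≤ L} F(s + √ε w) g(a(s + √ε w), w) dw`. By ellipticity the new integrand is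
dominated by a multiple of the Gaussian density `g(a₂, ·)`, and (the Hölder condition giving
continuity of `a`) it converges pointwise as `ε → 0⁺`. For the direct term `s = y < L` the limit
is `h(u, y) g(a(y), w)`, of integral `h(u, y)`; for the reflected term
`z + y - 2L = z - (2L - y)` the centre `2L - y` lies beyond `L`, so the indicator, and hence the
limit, vanishes.
-/

open MeasureTheory

/-- Gaussian heat kernel `g(c,u) = (2πc)^{-1/2} exp(-u²/(2c))`. -/
noncomputable def gk (c u : ℝ) : ℝ :=
  (2 * Real.pi * c) ^ (-(1 : ℝ) / 2) * Real.exp (-u ^ 2 / (2 * c))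

open Real Set Filter Topology

lemma gk_eq {c : ℝ} (hc : 0 < c) (u : ℝ) :
    gk c u = (√(2 * π * c))⁻¹ * exp (-u ^ 2 / (2 * c)) := by
  rw [gk, neg_div, rpow_neg (by positivity), ← sqrt_eq_rpow]

lemma gk_nonneg {c : ℝ} (hc : 0 < c) (u : ℝ) : 0 ≤ gk c u := by
  rw [gk_eq hc]; positivity

lemma gk_sub_eq_gaussianPDFReal {c : ℝ} (hc : 0 < c) (s : ℝ) :
    (fun z => gk c (z - s)) = ProbabilityTheory.gaussianPDFReal s ⟨c, hc.le⟩ := by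
  ext z
  rw [gk_eq hc]
  rfl

lemma integrable_gk_sub {c : ℝ} (hc : 0 < c) (s : ℝ) : Integrable fun z => gk c (z - s) := by
  rw [gk_sub_eq_gaussianPDFReal hc]
  exact ProbabilityTheory.integrable_gaussianPDFReal s _

lemma integral_gk {c : ℝ} (hc : 0 < c) : ∫ w, gk c w = 1 := by
  calc ∫ w, gk c w = ∫ w, gk c (w - 0) := by simp_rw [sub_zero]
    _ = 1 := by
      rw [gk_sub_eq_gaussianPDFReal hc]
      exact ProbabilityTheory.integral_gaussianPDFReal_eq_one 0
        fun h0 => hc.ne' (congrArg NNReal.toReal h0)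

lemma gk_le_sqrt_div_mul_gk {m c m' : ℝ} (hm : 0 < m) (hmc : m ≤ c) (hcm : c ≤ m') (w : ℝ) :
    gk c w ≤ √(m' / m) * gk m' w := by
  have hc : 0 < c := hm.trans_le hmc
  have hm' : 0 < m' := hc.trans_le hcm
  have hsqrt : √(m' / m) * (√(2 * π * m'))⁻¹ = (√(2 * π * m))⁻¹ := by
    have : 0 < √m' := sqrt_pos.2 hm'
    rw [sqrt_div' _ hm.le, sqrt_mul (by positivity) m', sqrt_mul (by positivity) m]
    field_simp
  have hexp : -w ^ 2 / (2 * c) ≤ -w ^ 2 / (2 * m') := by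
    rw [div_le_div_iff₀ (by positivity) (by positivity)]
    nlinarith [sq_nonneg w]
  rw [gk_eq hc, gk_eq hm', ← mul_assoc, hsqrt]
  gcongr

lemma mul_gk_mul_sq {c t : ℝ} (hc : 0 < c) (ht : 0 < t) (w : ℝ) :
    t * gk (c * t ^ 2) (t * w) = gk c w := by
  rw [gk_eq (by positivity), gk_eq hc, show 2 * π * (c * t ^ 2) = 2 * π * c * t ^ 2 by ring,
    sqrt_mul (by positivity), sqrt_sq ht.le]
  field_simp

lemma continuousAt_gk {c : ℝ} (hc : 0 < c) (w : ℝ) :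
    ContinuousAt (fun p : ℝ × ℝ => gk p.1 p.2) (c, w) := by
  have hbase : 2 * π * c ≠ 0 := by positivity
  have hden : 2 * c ≠ 0 := by positivity
  exact ((continuousAt_const.mul continuousAt_fst).rpow_const (Or.inl hbase)).mul
    ((continuousAt_snd.pow 2).neg.div (continuousAt_const.mul continuousAt_fst) hden).rexp

lemma continuous_of_dist_le_mul_rpow {α β : Type*} [PseudoMetricSpace α] [PseudoMetricSpace β]
    {f : α → β} {K η : ℝ} (hη : 0 < η) (hf : ∀ x y, dist (f x) (f y) ≤ K * dist x y ^ η) :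
    Continuous f := by
  refine continuous_iff_continuousAt.2 fun x => tendsto_iff_dist_tendsto_zero.2 ?_
  have hcont : Continuous fun y => K * dist y x ^ η :=
    continuous_const.mul ((continuous_id.dist continuous_const).rpow_const fun _ => Or.inr hη.le)
  have hlim : Tendsto (fun y => K * dist y x ^ η) (𝓝 x) (𝓝 0) := by
    simpa [zero_rpow hη.ne'] using hcont.tendsto x
  exact squeeze_zero (fun _ => dist_nonneg) (fun y => hf y x) hlim

lemma Continuous.gk {α : Type*} [TopologicalSpace α] {f g : α → ℝ} (hf : Continuous f)
    (hg : Continuous g) (hpos : ∀ x, 0 < f x) : Continuous fun x => gk (f x) (g x) :=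
  continuous_iff_continuousAt.2 fun x =>
    (continuousAt_gk (hpos x) (g x)).comp (f := fun x => (f x, g x))
      (hf.continuousAt.prodMk hg.continuousAt)

lemma tendsto_add_sqrt_mul (s w : ℝ) : Tendsto (fun ε => s + √ε * w) (𝓝[>] 0) (𝓝 s) :=
  ((continuous_const.add (continuous_sqrt.mul continuous_const)).tendsto' 0 s
    (by simp)).mono_left nhdsWithin_le_nhds

section EllipticCoefficient

variable {a : ℝ → ℝ} {a₁ a₂ : ℝ}

lemma integrable_gk_mul_sub (hca : Continuous a) (ha₁ : 0 < a₁)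
    (hell : ∀ z, a₁ ≤ a z ∧ a z ≤ a₂) {ε : ℝ} (hε : 0 < ε) (s : ℝ) :
    Integrable fun z => gk (a z * ε) (z - s) := by
  have hpos : ∀ z, 0 < a z * ε := fun z => mul_pos (ha₁.trans_le (hell z).1) hε
  have hbound := (integrable_gk_sub (mul_pos (ha₁.trans_le ((hell 0).1.trans (hell 0).2)) hε)
    s).const_mul √(a₂ * ε / (a₁ * ε))
  refine hbound.mono' ((hca.mul continuous_const).gk (continuous_sub_right s) hpos
    ).aestronglyMeasurable (ae_of_all _ fun z => ?_)
  rw [norm_of_nonneg (gk_nonneg (hpos z) _)]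
  exact gk_le_sqrt_div_mul_gk (mul_pos ha₁ hε) (by gcongr; exact (hell z).1)
    (by gcongr; exact (hell z).2) _

lemma setIntegral_Iic_mul_gk_eq_integral_rescaled (ha : ∀ z, 0 < a z) (F : ℝ → ℝ) (L s : ℝ)
    {ε : ℝ} (hε : 0 < ε) :
    ∫ z in Iic L, F z * gk (a z * ε) (z - s) =
      ∫ w, (Iic L).indicator F (s + √ε * w) * gk (a (s + √ε * w)) w := by
  set Φ := (Iic L).indicator fun z => F z * gk (a z * ε) (z - s)
  have hsqrt : 0 < √ε := sqrt_pos.2 hε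
  have hscale : ∫ z, Φ z = ∫ w, √ε * Φ (s + √ε * w) := by
    rw [integral_const_mul, Measure.integral_comp_mul_left (fun x => Φ (s + x)),
      integral_add_left_eq_self, abs_of_pos (inv_pos.2 hsqrt), smul_eq_mul,
      mul_inv_cancel_left₀ hsqrt.ne']
  rw [← integral_indicator measurableSet_Iic, hscale]
  congr 1 with w
  simp only [Φ, indicator_mul_left, add_sub_cancel_left]
  have hrescale := mul_gk_mul_sq (ha (s + √ε * w)) hsqrt w
  rw [sq_sqrt hε.le] at hrescale
  rw [mul_left_comm, hrescale]

lemma integrableOn_Iic_mul_gk (hca : Continuous a) (ha₁ : 0 < a₁)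
    (hell : ∀ z, a₁ ≤ a z ∧ a z ≤ a₂) {F : ℝ → ℝ} {L M : ℝ} (hFc : ContinuousOn F (Iic L))
    (hFb : ∀ z, |F z| ≤ M) {ε : ℝ} (hε : 0 < ε) (s : ℝ) :
    IntegrableOn (fun z => F z * gk (a z * ε) (z - s)) (Iic L) :=
  (integrable_gk_mul_sub hca ha₁ hell hε s).integrableOn.bdd_mul
    (hFc.aestronglyMeasurable measurableSet_Iic) (ae_of_all _ hFb)

lemma tendsto_integral_mul_gk_rescaled (hca : Continuous a) (ha₁ : 0 < a₁)
    (hell : ∀ z, a₁ ≤ a z ∧ a z ≤ a₂) {G : ℝ → ℝ → ℝ} {M c : ℝ} (s : ℝ)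
    (hGm : ∀ᶠ ε in 𝓝[>] 0, AEStronglyMeasurable (G ε)) (hGb : ∀ ε w, |G ε w| ≤ M)
    (hG : ∀ w, Tendsto (fun ε => G ε w) (𝓝[>] 0) (𝓝 c)) :
    Tendsto (fun ε => ∫ w, G ε w * gk (a (s + √ε * w)) w) (𝓝[>] 0) (𝓝 c) := by
  have ha : ∀ z, 0 < a z := fun z => ha₁.trans_le (hell z).1
  have ha₂ : 0 < a₂ := (ha 0).trans_le (hell 0).2
  have hM : 0 ≤ M := (abs_nonneg _).trans (hGb 0 0)
  have hlimit : ∫ w, c * gk (a s) w = c := by rw [integral_const_mul, integral_gk (ha s), mul_one]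
  rw [← hlimit]
  refine tendsto_integral_filter_of_dominated_convergence (fun w => M * (√(a₂ / a₁) * gk a₂ w))
    ?_ ?_ (by simpa using ((integrable_gk_sub ha₂ 0).const_mul √(a₂ / a₁)).const_mul M) ?_
  · filter_upwards [hGm] with ε hε
    exact hε.mul ((hca.comp (continuous_const.add (continuous_const.mul continuous_id))).gk
      continuous_id fun _ => ha _).aestronglyMeasurable
  · refine Eventually.of_forall fun ε => ae_of_all _ fun w => ?_
    rw [norm_mul, norm_of_nonneg (gk_nonneg (ha _) _)]
    exact mul_le_mul (hGb ε w) (gk_le_sqrt_div_mul_gk ha₁ (hell _).1 (hell _).2 w)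
      (gk_nonneg (ha _) _) hM
  · refine ae_of_all _ fun w => (hG w).mul ?_
    exact (continuousAt_gk (ha s) w).tendsto.comp
      (((hca.tendsto s).comp (tendsto_add_sqrt_mul s w)).prodMk_nhds tendsto_const_nhds)

lemma tendsto_setIntegral_Iic_mul_gk (hca : Continuous a) (ha₁ : 0 < a₁)
    (hell : ∀ z, a₁ ≤ a z ∧ a z ≤ a₂) {F : ℝ → ℝ → ℝ} {M c L s : ℝ}
    (hFc : ∀ ε > 0, ContinuousOn (F ε) (Iic L)) (hFb : ∀ ε z, |F ε z| ≤ M)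
    (hF : ∀ w, Tendsto (fun ε => (Iic L).indicator (F ε) (s + √ε * w)) (𝓝[>] 0) (𝓝 c)) :
    Tendsto (fun ε => ∫ z in Iic L, F ε z * gk (a z * ε) (z - s)) (𝓝[>] 0) (𝓝 c) := by
  classical
  have ha : ∀ z, 0 < a z := fun z => ha₁.trans_le (hell z).1
  refine (tendsto_integral_mul_gk_rescaled (M := M) hca ha₁ hell s ?_ ?_ hF).congr' ?_
  · filter_upwards [self_mem_nhdsWithin] with ε hε
    have hmeas : Measurable ((Iic L).piecewise (F ε) 0) :=
      (hFc ε hε).measurable_piecewise continuousOn_const measurableSet_Iic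
    exact (hmeas.comp (measurable_const.add (measurable_const.mul measurable_id))
      ).aestronglyMeasurable
  · exact fun ε w => (norm_indicator_le_norm_self (F ε) _).trans (hFb ε _)
  · filter_upwards [self_mem_nhdsWithin] with ε hε
    exact (setIntegral_Iic_mul_gk_eq_integral_rescaled ha (F ε) L s hε).symm

end EllipticCoefficient

lemma tendsto_indicator_Iic_of_lt {h : ℝ → ℝ → ℝ} {L u s : ℝ}
    (hcont : ContinuousOn (fun p : ℝ × ℝ => h p.1 p.2) (Ici 0 ×ˢ Iic L)) (hu : 0 ≤ u)
    (hs : s < L) (w : ℝ) :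
    Tendsto (fun ε => (Iic L).indicator (h (u + ε)) (s + √ε * w)) (𝓝[>] 0) (𝓝 (h u s)) := by
  have hin : ∀ᶠ ε in 𝓝[>] 0, s + √ε * w ∈ Iic L :=
    (tendsto_add_sqrt_mul s w).eventually (Iic_mem_nhds hs)
  have hpath : Tendsto (fun ε => (u + ε, s + √ε * w)) (𝓝[>] 0) (𝓝[Ici 0 ×ˢ Iic L] (u, s)) := by
    refine tendsto_nhdsWithin_iff.2 ⟨?_, ?_⟩
    · exact (((continuous_const.add continuous_id).tendsto' 0 u (add_zero u)).mono_left
        nhdsWithin_le_nhds).prodMk_nhds (tendsto_add_sqrt_mul s w)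
    · filter_upwards [self_mem_nhdsWithin, hin] with ε (hε : 0 < ε) hε'
      exact ⟨show 0 ≤ u + ε by linarith, hε'⟩
  refine ((hcont (u, s) ⟨hu, hs.le⟩).tendsto.comp hpath).congr' ?_
  filter_upwards [hin] with ε hε
  exact (indicator_of_mem hε _).symm

lemma tendsto_indicator_Iic_of_gt (F : ℝ → ℝ → ℝ) {L s : ℝ} (hs : L < s) (w : ℝ) :
    Tendsto (fun ε => (Iic L).indicator (F ε) (s + √ε * w)) (𝓝[>] 0) (𝓝 0) :=
  tendsto_const_nhds.congr' <| ((tendsto_add_sqrt_mul s w).eventually (Ioi_mem_nhds hs)).mono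
    fun ε hε => (indicator_of_notMem (s := Iic L) (not_le.2 hε) (F ε)).symm

theorem killed_kernel_approximate_identity_general (L η K a₁ a₂ M u y : ℝ) (a : ℝ → ℝ)
    (h : ℝ → ℝ → ℝ)
    (hη : η ∈ Set.Ioc (0 : ℝ) 1) (ha₁ : 0 < a₁)
    (hell : ∀ w, a₁ ≤ a w ∧ a w ≤ a₂)
    (hHolder : ∀ w w', |a w - a w'| ≤ K * |w - w'| ^ η)
    (hbd : ∀ p q, |h p q| ≤ M)
    (hcont : ContinuousOn (fun p : ℝ × ℝ => h p.1 p.2) (Set.Ici 0 ×ˢ Set.Iic L))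
    (hu : 0 ≤ u) (hy : y < L) :
    Filter.Tendsto
      (fun ε => ∫ z in Set.Iic L,
        h (u + ε) z * (gk (a z * ε) (z - y) - gk (a z * ε) (z + y - 2 * L)))
      (nhdsWithin 0 (Set.Ioi 0)) (nhds (h u y)) := by
  have hca : Continuous a :=
    continuous_of_dist_le_mul_rpow hη.1 (by simpa only [Real.dist_eq] using hHolder)
  have hslice : ∀ ε > 0, ContinuousOn (h (u + ε)) (Iic L) := fun ε hε =>
    hcont.comp (continuous_const.prodMk continuous_id).continuousOn
      fun z hz => ⟨mem_Ici.2 (by linarith), hz⟩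
  have hbd' : ∀ ε z, |h (u + ε) z| ≤ M := fun ε z => hbd _ _
  have hdirect := tendsto_setIntegral_Iic_mul_gk hca ha₁ hell hslice hbd'
    (tendsto_indicator_Iic_of_lt hcont hu hy)
  have hreflected := tendsto_setIntegral_Iic_mul_gk (s := 2 * L - y) hca ha₁ hell hslice hbd'
    (tendsto_indicator_Iic_of_gt _ (by linarith))
  rw [← sub_zero (h u y)]
  refine (hdirect.sub hreflected).congr' ?_
  filter_upwards [self_mem_nhdsWithin] with ε hε
  have hreflect : ∀ z, z + y - 2 * L = z - (2 * L - y) := fun z => by ring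
  simp_rw [mul_sub, hreflect]
  exact (integral_sub (integrableOn_Iic_mul_gk hca ha₁ hell (hslice ε hε) (hbd' ε) hε y)
    (integrableOn_Iic_mul_gk hca ha₁ hell (hslice ε hε) (hbd' ε) hε _)).symm

/-- Approximate identity property of the killed Gaussian kernel with diffusion
coefficient frozen at the terminal point: for `h` bounded and continuous on
`ℝ₊ × (-∞,L]`, `a` bounded, uniformly elliptic, `η`-Hölder, `u ≥ 0` and `y < L`,
`lim_{ε→0⁺} ∫_{-∞}^L h(u+ε, z) q̄^z_ε(y,z) dz = h(u,y)`. -/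
theorem killed_kernel_approximate_identity (L η K a₁ a₂ M u y : ℝ) (a : ℝ → ℝ)
    (h : ℝ → ℝ → ℝ)
    (hη : η ∈ Set.Ioc (0 : ℝ) 1) (ha₁ : 0 < a₁)
    (hell : ∀ w, a₁ ≤ a w ∧ a w ≤ a₂) (hK : 0 < K)
    (hHolder : ∀ w w', |a w - a w'| ≤ K * |w - w'| ^ η)
    (hbd : ∀ p q, |h p q| ≤ M)
    (hcont : ContinuousOn (fun p : ℝ × ℝ => h p.1 p.2) (Set.Ici 0 ×ˢ Set.Iic L))
    (hu : 0 ≤ u) (hy : y < L) :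
    Filter.Tendsto
      (fun ε => ∫ z in Set.Iic L,
        h (u + ε) z * (gk (a z * ε) (z - y) - gk (a z * ε) (z + y - 2 * L)))
      (nhdsWithin 0 (Set.Ioi 0)) (nhds (h u y)) :=
  killed_kernel_approximate_identity_general L η K a₁ a₂ M u y a h hη ha₁ hell hHolder hbd hcont hu
    hy
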